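/- arXiv:0911.1573 — 5 statements merged into one kernel-verified Lean document; each statement's English description precedes it below -/
import Mathlib

section
/- Let N be a positive integer, p an integer, a a complex number with a^N ≠ 1, and ω = exp(2πi/N). Then the sum over i from 1 to N of ω^(-p(i-1))/(1 - a·ω^(i-1)) equals N·a^{p mod N}/(1 - a^N), where {p} = p mod N denotes the remainder of p modulo N in {0,...,N-1}. -/
/-! Since `(a ω^i)^N = a^N`, each `1 / (1 - a ω^i)` is the geometric sum
`∑_{k<N} a^k ω^{ik} / (1 - a^N)`. Exchanging the sums, the coefficient of `a^k` is
`∑_i ω^{(k-p)i}`, which is `N` when `k ≡ p (mod N)` and `0` otherwise. -/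

open Finset

namespace IsPrimitiveRoot

variable {K : Type*} [Field K] {ω : K} {N : ℕ}

theorem sum_pow_zpow_eq_ite (hω : IsPrimitiveRoot ω N) (m : ℤ) :
    ∑ i ∈ range N, (ω ^ m) ^ i = if (N : ℤ) ∣ m then (N : K) else 0 := by
  split_ifs with hm
  · simp [(hω.zpow_eq_one_iff_dvd m).mpr hm]
  · have hne : ω ^ m ≠ 1 := fun h => hm ((hω.zpow_eq_one_iff_dvd m).mp h)
    have hpow : (ω ^ m) ^ N = 1 := by
      rw [← zpow_natCast, ← zpow_mul, mul_comm, zpow_mul, zpow_natCast, hω.pow_eq_one, one_zpow]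
    rw [geom_sum_eq hne, hpow, sub_self, zero_div]

end IsPrimitiveRoot

theorem inv_one_sub_eq_geom_sum_div {K : Type*} [Field K] {x b : K} {N : ℕ} (hx : x ^ N = b)
    (hb : b ≠ 1) : (1 - x)⁻¹ = (∑ k ∈ range N, x ^ k) / (1 - b) := by
  have hsub : 1 - b ≠ 0 := sub_ne_zero.mpr hb.symm
  have h1x : 1 - x ≠ 0 := by
    rintro h
    exact hb (by rw [← hx, ← sub_eq_zero.mp h, one_pow])
  rw [eq_div_iff hsub, ← hx, ← mul_neg_geom_sum, inv_mul_cancel_left₀ h1x]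

theorem Int.dvd_natCast_sub_iff_eq_toNat_emod {N k : ℕ} (hk : k < N) (p : ℤ) :
    (N : ℤ) ∣ k - p ↔ k = (p % N).toNat := by
  rw [← Int.modEq_iff_dvd, Int.ModEq,
    Int.emod_eq_of_lt (a := k) (by positivity) (by exact_mod_cast hk)]
  have := Int.emod_nonneg p (by omega : (N : ℤ) ≠ 0)
  omega

theorem IsPrimitiveRoot.sum_zpow_div_one_sub_mul {K : Type*} [Field K] {ω : K} {N : ℕ}
    (hω : IsPrimitiveRoot ω N) (p : ℤ) {a : K} (ha : a ^ N ≠ 1) :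
    ∑ i ∈ range N, ω ^ (-(p * (i : ℤ))) / (1 - a * ω ^ i)
      = N * a ^ (p % (N : ℤ)).toNat / (1 - a ^ N) := by
  have hN : N ≠ 0 := by rintro rfl; exact ha (pow_zero a)
  have hω0 : ω ≠ 0 := hω.ne_zero hN
  have hgeom (i : ℕ) : (1 - a * ω ^ i)⁻¹ = (∑ k ∈ range N, (a * ω ^ i) ^ k) / (1 - a ^ N) :=
    inv_one_sub_eq_geom_sum_div (by rw [mul_pow, ← pow_mul, pow_mul', hω.pow_eq_one, one_pow,
      mul_one]) ha
  have hterm (i k : ℕ) :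
      ω ^ (-(p * (i : ℤ))) * (a * ω ^ i) ^ k = a ^ k * (ω ^ ((k : ℤ) - p)) ^ i := by
    rw [mul_pow, ← pow_mul, ← zpow_natCast ω, ← zpow_natCast (ω ^ ((k : ℤ) - p)), ← zpow_mul,
      mul_left_comm, ← zpow_add₀ hω0]
    congr 2
    push_cast
    ring
  calc ∑ i ∈ range N, ω ^ (-(p * (i : ℤ))) / (1 - a * ω ^ i)
      = (∑ k ∈ range N, a ^ k * ∑ i ∈ range N, (ω ^ ((k : ℤ) - p)) ^ i) / (1 - a ^ N) := by
        simp_rw [div_eq_mul_inv, hgeom, mul_div_assoc', Finset.mul_sum, hterm, ← Finset.sum_div]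
        rw [Finset.sum_comm, div_eq_mul_inv]
    _ = (∑ k ∈ range N, if k = (p % (N : ℤ)).toNat then a ^ k * N else 0) / (1 - a ^ N) := by
        congr 1
        refine Finset.sum_congr rfl fun k hk => ?_
        simp only [hω.sum_pow_zpow_eq_ite,
          Int.dvd_natCast_sub_iff_eq_toNat_emod (mem_range.mp hk), mul_ite, mul_zero]
    _ = N * a ^ (p % (N : ℤ)).toNat / (1 - a ^ N) := by
        have hlt : (p % (N : ℤ)).toNat < N := Int.natMod_lt hN
        rw [Finset.sum_ite_eq', if_pos (mem_range.mpr hlt), mul_comm]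

theorem stmt_0_general (N : ℕ) (p : ℤ) (a : ℂ) (ha : a ^ N ≠ 1)
    (ω : ℂ) (hω : ω = Complex.exp (2 * Real.pi * Complex.I / N)) :
    ∑ i ∈ Finset.range N, ω ^ (-(p * (i : ℤ))) / (1 - a * ω ^ i)
      = N * a ^ (p % (N : ℤ)).toNat / (1 - a ^ N) := by
  have hN : N ≠ 0 := by rintro rfl; exact ha (pow_zero a)
  exact (hω ▸ Complex.isPrimitiveRoot_exp N hN).sum_zpow_div_one_sub_mul p ha

theorem stmt_0 (N : ℕ) (hN : 0 < N) (p : ℤ) (a : ℂ) (ha : a ^ N ≠ 1)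
    (ω : ℂ) (hω : ω = Complex.exp (2 * Real.pi * Complex.I / N)) :
    ∑ i ∈ Finset.range N, ω ^ (-(p * (i : ℤ))) / (1 - a * ω ^ i)
      = N * a ^ (p % (N : ℤ)).toNat / (1 - a ^ N) :=
  stmt_0_general N p a ha ω hω
end

section
/- Let N be a positive integer, p an integer, k an integer with 1 ≤ k ≤ N, ω = exp(2πi/N), and a = ω^(-k+1). Then the sum over i from 1 to N with i ≠ k of ω^(-p(i-1))/(1 - a·ω^(i-1)) equals ((N-1)/2 - {p})·a^{p}, where {p} = p mod N ∈ {0,...,N-1}. -/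
/-!
The summand is `N`-periodic in `i`, so shifting the index by `k - 1` turns the sum into `a ^ p`
times `S p = ∑_{j=1}^{N-1} ω^(-p j) / (1 - ω^j)`, which only depends on `p mod N`. The terms for
`j` and `N - j` pair up to `1`, so `S 0 = (N - 1) / 2`; and for `r + 1 < N` the summands of
`S (r + 1)` and `S r` differ by `ω^(-(r+1) j)`, a nontrivial geometric progression over the roots
of unity whose sum over `1 ≤ j < N` is `-1`, so `S (r + 1) = S r - 1`.
-/

open Finset

theorem zpow_eq_zpow_of_modEq {G₀ : Type*} [GroupWithZero G₀] {x : G₀} {n : ℕ} (hx : x ^ n = 1)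
    {a b : ℤ} (h : a ≡ b [ZMOD n]) : x ^ a = x ^ b := by
  obtain rfl | hn := eq_or_ne n 0
  · rw [Nat.cast_zero, Int.modEq_zero_iff] at h
    rw [h]
  obtain ⟨t, ht⟩ := h.dvd
  rw [← sub_add_cancel b a, zpow_add₀ (IsUnit.of_pow_eq_one hx hn).ne_zero, ht, zpow_mul,
    zpow_natCast, hx, one_zpow, one_mul]

namespace Function.Periodic

variable {M : Type*} [AddCommGroup M] {f : ℕ → M} {N : ℕ}

theorem sum_range_add (hf : Periodic f N) (K : ℕ) :
    ∑ j ∈ range N, f (j + K) = ∑ j ∈ range N, f j := by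
  induction K with
  | zero => rfl
  | succ K ih =>
    have h := sum_range_succ' (fun j => f (j + K)) N
    rw [sum_range_succ, ih, add_comm N K, hf K] at h
    simpa only [add_assoc, add_comm 1 K, zero_add, add_left_inj] using h.symm

theorem sum_range_erase_eq_sum_Ico_add (hf : Periodic f N) {K : ℕ} (hK : K < N) :
    ∑ i ∈ (range N).erase K, f i = ∑ j ∈ Ico 1 N, f (j + K) := by
  rw [sum_erase_eq_sub (mem_range.mpr hK), ← hf.sum_range_add K,
    sum_range_eq_add_Ico _ (by omega), zero_add, add_sub_cancel_left]

end Function.Periodic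

theorem inv_one_sub_add_inv_one_sub_inv {F : Type*} [Field F] {z : F} (h0 : z ≠ 0) (h1 : z ≠ 1) :
    (1 - z)⁻¹ + (1 - z⁻¹)⁻¹ = 1 := by
  have : 1 - z ≠ 0 := sub_ne_zero.mpr h1.symm
  field_simp
  ring

namespace IsPrimitiveRoot

variable {F : Type*} [Field F] {ζ : F} {N : ℕ}

theorem sum_Ico_inv_one_sub_pow [NeZero (2 : F)] (hζ : IsPrimitiveRoot ζ N) (hN : N ≠ 0) :
    ∑ j ∈ Ico 1 N, (1 - ζ ^ j)⁻¹ = ((N : F) - 1) / 2 := by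
  have hreflect : ∑ j ∈ Ico 1 N, (1 - ζ ^ (N - j))⁻¹ = ∑ j ∈ Ico 1 N, (1 - ζ ^ j)⁻¹ := by
    rw [sum_Ico_reflect (fun j => (1 - ζ ^ j)⁻¹) 1 (Nat.le_succ N), Nat.add_sub_cancel,
      Nat.add_sub_cancel_left]
  have hpair : ∀ j ∈ Ico 1 N, (1 - ζ ^ j)⁻¹ + (1 - ζ ^ (N - j))⁻¹ = 1 := by
    intro j hj
    obtain ⟨hj1, hjN⟩ := mem_Ico.mp hj
    rw [pow_sub₀ ζ (hζ.ne_zero hN) hjN.le, hζ.pow_eq_one, one_mul]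
    exact inv_one_sub_add_inv_one_sub_inv (pow_ne_zero j (hζ.ne_zero hN))
      (hζ.pow_ne_one_of_pos_of_lt (by omega) hjN)
  have htwice : 2 * ∑ j ∈ Ico 1 N, (1 - ζ ^ j)⁻¹ = N - 1 := by
    rw [two_mul]
    nth_rw 2 [← hreflect]
    rw [← sum_add_distrib, sum_congr rfl hpair, sum_const, Nat.card_Ico,
      nsmul_one, Nat.cast_sub (by omega), Nat.cast_one]
  rw [← htwice, mul_div_cancel_left₀ _ (NeZero.ne 2)]

theorem sum_Ico_inv_pow_pow_div_one_sub_pow [NeZero (2 : F)] (hζ : IsPrimitiveRoot ζ N) {r : ℕ}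
    (hr : r < N) : ∑ j ∈ Ico 1 N, (ζ ^ j)⁻¹ ^ r / (1 - ζ ^ j) = ((N : F) - 1) / 2 - r := by
  induction r with
  | zero =>
    simp only [pow_zero, one_div, Nat.cast_zero, sub_zero]
    exact hζ.sum_Ico_inv_one_sub_pow (by omega)
  | succ r ih =>
    have hstep : ∀ j ∈ Ico 1 N, (ζ ^ j)⁻¹ ^ (r + 1) / (1 - ζ ^ j)
        = (ζ ^ j)⁻¹ ^ r / (1 - ζ ^ j) + (ζ⁻¹ ^ (r + 1)) ^ j := by
      intro j hj
      obtain ⟨hj1, hjN⟩ := mem_Ico.mp hj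
      have h0 : ζ ^ j ≠ 0 := pow_ne_zero j (hζ.ne_zero (by omega))
      have h1 : 1 - ζ ^ j ≠ 0 := sub_ne_zero.mpr (hζ.pow_ne_one_of_pos_of_lt (by omega) hjN).symm
      rw [show (ζ⁻¹ ^ (r + 1)) ^ j = (ζ ^ j)⁻¹ ^ (r + 1) by rw [← inv_pow]; ring]
      generalize ζ ^ j = w at h0 h1
      rw [div_add' _ _ _ h1, pow_succ]
      congr 1
      field_simp
      ring
    have hgeom : ∑ j ∈ Ico 1 N, (ζ⁻¹ ^ (r + 1)) ^ j = -1 := by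
      have hne : ζ⁻¹ ^ (r + 1) ≠ 1 := hζ.inv.pow_ne_one_of_pos_of_lt r.succ_ne_zero hr
      have hsum := geom_sum_eq hne N
      rw [← pow_mul, mul_comm, pow_mul, hζ.inv.pow_eq_one, one_pow, sub_self, zero_div,
        sum_range_eq_add_Ico _ (by omega), pow_zero] at hsum
      linear_combination hsum
    rw [sum_congr rfl hstep, sum_add_distrib, ih (by omega), hgeom]
    push_cast
    ring

theorem sum_Ico_zpow_div_one_sub_pow [NeZero (2 : F)] (hζ : IsPrimitiveRoot ζ N) (hN : N ≠ 0)
    (p : ℤ) :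
    ∑ j ∈ Ico 1 N, ζ ^ (-(p * j)) / (1 - ζ ^ j) = ((N : F) - 1) / 2 - ((p % N : ℤ) : F) := by
  set r := (p % N).toNat
  have hr : (r : ℤ) = p % N := Int.toNat_of_nonneg (Int.emod_nonneg p (by exact_mod_cast hN))
  have hrN : r < N := by have := Int.emod_lt_of_pos p (by omega : (0 : ℤ) < N); omega
  have hpr : p ≡ r [ZMOD N] := hr ▸ (Int.mod_modEq p N).symm
  rw [← hr, Int.cast_natCast, ← hζ.sum_Ico_inv_pow_pow_div_one_sub_pow hrN]
  refine sum_congr rfl fun j _ => ?_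
  rw [zpow_eq_zpow_of_modEq hζ.pow_eq_one (hpr.mul_right j).neg, zpow_neg, ← Nat.cast_mul,
    zpow_natCast, inv_pow, ← pow_mul, mul_comm]

end IsPrimitiveRoot

theorem stmt_1_general (N : ℕ) (p : ℤ) (k : ℕ) (hk1 : 1 ≤ k) (hk2 : k ≤ N)
    (ω : ℂ) (hω : ω = Complex.exp (2 * Real.pi * Complex.I / N))
    (a : ℂ) (ha : a = ω ^ (-((k : ℤ) - 1))) :
    ∑ i ∈ (Finset.range N).erase (k - 1), ω ^ (-(p * (i : ℤ))) / (1 - a * ω ^ i)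
      = (((N : ℂ) - 1) / 2 - ((p % (N : ℤ) : ℤ) : ℂ)) * a ^ (p % (N : ℤ)).toNat := by
  have hN : N ≠ 0 := by omega
  have hζ : IsPrimitiveRoot ω N := hω ▸ Complex.isPrimitiveRoot_exp N hN
  set K := k - 1
  have haK : a = (ω ^ K)⁻¹ := by rw [ha, ← zpow_natCast, ← zpow_neg, Nat.cast_sub hk1, Nat.cast_one]
  have hperiodic : Function.Periodic (fun i : ℕ => ω ^ (-(p * i)) / (1 - a * ω ^ i)) N := by
    intro i
    have hmod : -(p * ↑(i + N)) ≡ -(p * i) [ZMOD N] := Int.modEq_iff_dvd.mpr ⟨p, by push_cast; ring⟩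
    simp only [pow_add, hζ.pow_eq_one, mul_one, zpow_eq_zpow_of_modEq hζ.pow_eq_one hmod]
  have hshift (j : ℕ) : ω ^ (-(p * ↑(j + K))) / (1 - a * ω ^ (j + K))
      = ω ^ (-(p * K)) * (ω ^ (-(p * j)) / (1 - ω ^ j)) := by
    have hωK : ω ^ K ≠ 0 := pow_ne_zero K (hζ.ne_zero hN)
    rw [haK, add_comm j K, pow_add, inv_mul_cancel_left₀ hωK, Nat.cast_add, mul_add, neg_add,
      zpow_add₀ (hζ.ne_zero hN), mul_div_assoc]
  have hapow : a ^ (p % N).toNat = ω ^ (-(p * K)) := by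
    have haN : a ^ N = 1 := by rw [haK, inv_pow, ← pow_mul, mul_comm, pow_mul, hζ.pow_eq_one,
      one_pow, inv_one]
    rw [← zpow_natCast, Int.toNat_of_nonneg (Int.emod_nonneg p (by exact_mod_cast hN)),
      zpow_eq_zpow_of_modEq haN (Int.mod_modEq p N), haK, ← zpow_natCast, ← zpow_neg, ← zpow_mul]
    congr 1
    ring
  rw [hperiodic.sum_range_erase_eq_sum_Ico_add (by omega : K < N),
    sum_congr rfl fun j _ => hshift j, ← mul_sum, hζ.sum_Ico_zpow_div_one_sub_pow hN, hapow, mul_comm]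

theorem stmt_1 (N : ℕ) (hN : 0 < N) (p : ℤ) (k : ℕ) (hk1 : 1 ≤ k) (hk2 : k ≤ N)
    (ω : ℂ) (hω : ω = Complex.exp (2 * Real.pi * Complex.I / N))
    (a : ℂ) (ha : a = ω ^ (-((k : ℤ) - 1))) :
    ∑ i ∈ (Finset.range N).erase (k - 1), ω ^ (-(p * (i : ℤ))) / (1 - a * ω ^ i)
      = (((N : ℂ) - 1) / 2 - ((p % (N : ℤ) : ℤ) : ℂ)) * a ^ (p % (N : ℤ)).toNat :=
  stmt_1_general N p k hk1 hk2 ω hω a ha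
end

section
/- Let μ₁,...,μ_L be distinct nonzero complex numbers, H₁,...,H_L column vectors in ℂ^M, K an invertible symmetric M×M matrix, and Γ the L×L matrix with Γ_{jk} = H_jᵀ K H_k/(μ_j + μ_k), assumed invertible with inverse Γ̌. Define T(λ) = ∏_{i=1}^{L}(λ+μ_i) · (I - ∑_{j,k=1}^{L} H_j Γ̌_{jk} H_kᵀ K/(λ+μ_k)). Then T(λ)⁻¹ = ∏_{i=1}^{L}(λ+μ_i)⁻¹ · (I + ∑_{j,k=1}^{L} H_j Γ̌_{jk} H_kᵀ K/(λ-μ_j)) for all λ with λ ≠ μ_j and λ ≠ -μ_k for all j,k. -/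
/-!
Put the columns `H j` side by side into an `M × L` matrix `𝐇`. The two sums are then
`A = 𝐇 Γ̌ D₊ 𝐇ᵀ K` and `B = 𝐇 D₋ Γ̌ 𝐇ᵀ K` with `D₊ = diag (λ + μ)⁻¹`, `D₋ = diag (λ - μ)⁻¹`,
and the definition of `Γ` says that it solves the Sylvester equation
`𝐇ᵀ K 𝐇 = diag (λ + μ) Γ - Γ diag (λ - μ)`. Substituting this into `A B` and `B A`, every factor
cancels against its inverse and `A B = B A = B - A`, i.e. `(1 - A) (1 + B) = (1 + B) (1 - A) = 1`.
-/

open Matrix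

namespace Matrix

section Sylvester

variable {R : Type*} [Ring R] {m n : Type*} [Fintype m] [Fintype n] [DecidableEq n]
  {X : Matrix m n R} {F : Matrix n m R} {Γ Γ' P P' Q Q' : Matrix n n R}

theorem mul_eq_sub_of_sylvester (hF : F * X = P * Γ - Γ * Q) (hΓ : Γ * Γ' = 1)
    (hΓ' : Γ' * Γ = 1) (hP : P' * P = 1) (hQ : Q * Q' = 1) :
    X * Γ' * P' * F * (X * Q' * Γ' * F) = X * Q' * Γ' * F - X * Γ' * P' * F := by
  have inner : Γ' * P' * (F * X) * Q' * Γ' = Q' * Γ' - Γ' * P' := by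
    calc Γ' * P' * (F * X) * Q' * Γ'
        = Γ' * (P' * P) * Γ * Q' * Γ' - Γ' * P' * Γ * (Q * Q') * Γ' := by
          rw [hF]; noncomm_ring
      _ = Γ' * Γ * Q' * Γ' - Γ' * P' * (Γ * Γ') := by
          rw [hP, hQ]; simp only [Matrix.mul_one, Matrix.mul_assoc]
      _ = Q' * Γ' - Γ' * P' := by
          rw [hΓ, hΓ', Matrix.mul_one, Matrix.one_mul]
  calc X * Γ' * P' * F * (X * Q' * Γ' * F) = X * (Γ' * P' * (F * X) * Q' * Γ') * F := by
        simp only [Matrix.mul_assoc]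
    _ = _ := by rw [inner, Matrix.mul_sub, Matrix.sub_mul]; simp only [Matrix.mul_assoc]

theorem mul_eq_sub_of_sylvester' (hF : F * X = P * Γ - Γ * Q) (hΓ : Γ * Γ' = 1)
    (hΓ' : Γ' * Γ = 1) (hP : P * P' = 1) (hQ : Q' * Q = 1) :
    X * Q' * Γ' * F * (X * Γ' * P' * F) = X * Q' * Γ' * F - X * Γ' * P' * F := by
  have inner : Q' * Γ' * (F * X) * Γ' * P' = Q' * Γ' - Γ' * P' := by
    calc Q' * Γ' * (F * X) * Γ' * P'
        = Q' * Γ' * P * (Γ * Γ') * P' - Q' * (Γ' * Γ) * Q * Γ' * P' := by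
          rw [hF]; noncomm_ring
      _ = Q' * Γ' - Γ' * P' := by
          rw [hΓ, hΓ', Matrix.mul_one, Matrix.mul_one, Matrix.mul_assoc _ P, hP, hQ,
            Matrix.mul_one, Matrix.one_mul]
  calc X * Q' * Γ' * F * (X * Γ' * P' * F) = X * (Q' * Γ' * (F * X) * Γ' * P') * F := by
        simp only [Matrix.mul_assoc]
    _ = _ := by rw [inner, Matrix.mul_sub, Matrix.sub_mul]; simp only [Matrix.mul_assoc]

theorem one_sub_mul_one_add_of_sylvester [DecidableEq m] (hF : F * X = P * Γ - Γ * Q)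
    (hΓ : Γ * Γ' = 1) (hΓ' : Γ' * Γ = 1) (hP : P' * P = 1) (hP' : P * P' = 1) (hQ : Q * Q' = 1)
    (hQ' : Q' * Q = 1) :
    (1 - X * Γ' * P' * F) * (1 + X * Q' * Γ' * F) = 1 ∧
      (1 + X * Q' * Γ' * F) * (1 - X * Γ' * P' * F) = 1 := by
  have hAB := mul_eq_sub_of_sylvester hF hΓ hΓ' hP hQ
  have hBA := mul_eq_sub_of_sylvester' hF hΓ hΓ' hP' hQ'
  set A := X * Γ' * P' * F
  set B := X * Q' * Γ' * F
  constructor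
  · calc (1 - A) * (1 + B) = 1 + B - A - A * B := by noncomm_ring
      _ = 1 := by rw [hAB]; abel
  · calc (1 + B) * (1 - A) = 1 + B - A - B * A := by noncomm_ring
      _ = 1 := by rw [hBA]; abel

end Sylvester

def ofColumns {R : Type*} {m n : Type*} (H : n → Matrix m (Fin 1) R) : Matrix m n R :=
  of fun a j => H j a 0

section ofColumns

variable {R : Type*} {m n : Type*} [Fintype m] (H : n → Matrix m (Fin 1) R)

theorem sum_sum_smul_mul_transpose_mul [CommSemiring R] [Fintype n] {p : Type*}
    (C : Matrix n n R) (K : Matrix m p R) :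
    ∑ j, ∑ k, C j k • (H j * (H k)ᵀ * K) = ofColumns H * C * ((ofColumns H)ᵀ * K) := by
  ext a b
  simp only [ofColumns, sum_apply, smul_apply, mul_apply, of_apply, transpose_apply,
    Finset.univ_unique, Fin.default_eq_zero, Finset.sum_singleton, smul_eq_mul, Finset.mul_sum,
    Finset.sum_mul]
  conv_rhs => enter [2, j]; rw [Finset.sum_comm]
  conv_rhs => rw [Finset.sum_comm]
  exact Finset.sum_congr rfl fun _ _ => Finset.sum_congr rfl fun _ _ =>
    Finset.sum_congr rfl fun _ _ => by ring

theorem transpose_ofColumns_mul_mul_ofColumns_apply [NonUnitalNonAssocSemiring R]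
    (K : Matrix m m R) (j k : n) :
    ((ofColumns H)ᵀ * K * ofColumns H) j k = ((H j)ᵀ * K * H k) 0 0 := by
  simp [ofColumns, Matrix.mul_apply]

end ofColumns

section diagonal

variable {R n : Type*} [DivisionRing R] [Fintype n] [DecidableEq n] {d : n → R}

theorem diagonal_inv_mul_diagonal (hd : ∀ i, d i ≠ 0) :
    diagonal (fun i => (d i)⁻¹) * diagonal d = 1 := by
  simp [diagonal_mul_diagonal, hd]

theorem diagonal_mul_diagonal_inv (hd : ∀ i, d i ≠ 0) :
    diagonal d * diagonal (fun i => (d i)⁻¹) = 1 := by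
  simp [diagonal_mul_diagonal, hd]

end diagonal

end Matrix

theorem stmt_14_general (M L : ℕ) (μ : Fin L → ℂ)
    (hμsum : ∀ j k, μ j + μ k ≠ 0)
    (H : Fin L → Matrix (Fin M) (Fin 1) ℂ)
    (K : Matrix (Fin M) (Fin M) ℂ)
    (Γ Γinv : Matrix (Fin L) (Fin L) ℂ)
    (hΓ : ∀ j k, Γ j k = (((H j)ᵀ * K * H k) 0 0) / (μ j + μ k))
    (hΓinv : Γ * Γinv = 1) (hΓinv' : Γinv * Γ = 1)
    (lam : ℂ) (hlam1 : ∀ j, lam ≠ μ j) (hlam2 : ∀ k, lam ≠ -μ k)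
    (T S : Matrix (Fin M) (Fin M) ℂ)
    (hT : T = (∏ i, (lam + μ i)) • ((1 : Matrix (Fin M) (Fin M) ℂ)
        - ∑ j, ∑ k, ((Γinv j k) / (lam + μ k)) • (H j * (H k)ᵀ * K)))
    (hS : S = (∏ i, (lam + μ i))⁻¹ • ((1 : Matrix (Fin M) (Fin M) ℂ)
        + ∑ j, ∑ k, ((Γinv j k) / (lam - μ j)) • (H j * (H k)ᵀ * K))) :
    T * S = 1 ∧ S * T = 1 := by
  have hlp : ∀ k, lam + μ k ≠ 0 := fun k h => hlam2 k (eq_neg_of_add_eq_zero_left h)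
  have hlm : ∀ j, lam - μ j ≠ 0 := fun j h => hlam1 j (sub_eq_zero.mp h)
  set X := ofColumns H
  have hA : ∑ j, ∑ k, (Γinv j k / (lam + μ k)) • (H j * (H k)ᵀ * K)
      = X * Γinv * diagonal (fun k => (lam + μ k)⁻¹) * (Xᵀ * K) := by
    rw [Matrix.mul_assoc X, ← sum_sum_smul_mul_transpose_mul]
    simp [mul_diagonal, div_eq_mul_inv]
  have hB : ∑ j, ∑ k, (Γinv j k / (lam - μ j)) • (H j * (H k)ᵀ * K)
      = X * diagonal (fun j => (lam - μ j)⁻¹) * Γinv * (Xᵀ * K) := by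
    rw [Matrix.mul_assoc X, ← sum_sum_smul_mul_transpose_mul]
    simp [diagonal_mul, div_eq_mul_inv, mul_comm]
  have hsylv : Xᵀ * K * X
      = diagonal (fun j => lam + μ j) * Γ - Γ * diagonal (fun k => lam - μ k) := by
    ext j k
    rw [transpose_ofColumns_mul_mul_ofColumns_apply]
    simp only [Matrix.sub_apply, diagonal_mul, mul_diagonal, hΓ]
    field_simp [hμsum j k]
    ring
  obtain ⟨hAB, hBA⟩ := one_sub_mul_one_add_of_sylvester hsylv hΓinv hΓinv'
    (diagonal_inv_mul_diagonal hlp) (diagonal_mul_diagonal_inv hlp)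
    (diagonal_mul_diagonal_inv hlm) (diagonal_inv_mul_diagonal hlm)
  have hc : (∏ i, (lam + μ i)) ≠ 0 := Finset.prod_ne_zero_iff.mpr fun i _ => hlp i
  subst hT hS
  rw [hA, hB, smul_mul_smul_comm, smul_mul_smul_comm, mul_inv_cancel₀ hc, inv_mul_cancel₀ hc,
    one_smul, one_smul]
  exact ⟨hAB, hBA⟩

theorem stmt_14 (M L : ℕ) (hL : 0 < L) (μ : Fin L → ℂ)
    (hμdist : Function.Injective μ) (hμ0 : ∀ i, μ i ≠ 0)
    (hμsum : ∀ j k, μ j + μ k ≠ 0)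
    (H : Fin L → Matrix (Fin M) (Fin 1) ℂ)
    (K : Matrix (Fin M) (Fin M) ℂ) (hKsym : Kᵀ = K) (hKunit : IsUnit K.det)
    (Γ Γinv : Matrix (Fin L) (Fin L) ℂ)
    (hΓ : ∀ j k, Γ j k = (((H j)ᵀ * K * H k) 0 0) / (μ j + μ k))
    (hΓinv : Γ * Γinv = 1) (hΓinv' : Γinv * Γ = 1)
    (lam : ℂ) (hlam1 : ∀ j, lam ≠ μ j) (hlam2 : ∀ k, lam ≠ -μ k)
    (T S : Matrix (Fin M) (Fin M) ℂ)
    (hT : T = (∏ i, (lam + μ i)) • ((1 : Matrix (Fin M) (Fin M) ℂ)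
        - ∑ j, ∑ k, ((Γinv j k) / (lam + μ k)) • (H j * (H k)ᵀ * K)))
    (hS : S = (∏ i, (lam + μ i))⁻¹ • ((1 : Matrix (Fin M) (Fin M) ℂ)
        + ∑ j, ∑ k, ((Γinv j k) / (lam - μ j)) • (H j * (H k)ᵀ * K))) :
    T * S = 1 ∧ S * T = 1 :=
  stmt_14_general M L μ hμsum H K Γ Γinv hΓ hΓinv hΓinv' lam hlam1 hlam2 T S hT hS
end

section
/- With T(λ) = ∏_{i=1}^{L}(λ+μ_i)(I - ∑_{j,k} H_j Γ̌_{jk} H_kᵀ K/(λ+μ_k)) as above, where Γ_{jk} = H_jᵀKH_k/(μ_j+μ_k) is symmetric (Γᵀ = Γ, since K is symmetric) so Γ̌_{jk}ᵀ = Γ̌_{kj}, one has T(-λ)ᵀ K T(λ) = ∏_{i=1}^{L}(μ_i² - λ²) · K for all λ avoiding the poles. -/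
/-!
Let `𝐇` be the matrix with columns `H j`. Then `T(λ) = ∏ (λ + μᵢ) • (1 - 𝐇 P(λ) 𝐇ᵀ K)` with
`P(λ) = Γ⁻¹ D(λ)⁻¹` and `D(λ) = diag(λ + μₖ)`, and the definition of `Γ` says that it solves the
Sylvester equation `𝐇ᵀ K 𝐇 = Γ D(-λ) + D(λ) Γ` for every `λ`. Conjugating this equation by `Γ⁻¹`
gives `P(-λ)ᵀ (𝐇ᵀ K 𝐇) P(λ) = P(-λ)ᵀ + P(λ)`, which is exactly what makes the cross terms in
`(1 - 𝐇 P(-λ) 𝐇ᵀ K)ᵀ K (1 - 𝐇 P(λ) 𝐇ᵀ K)` cancel, leaving `K`.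
-/

open Matrix

namespace Matrix

variable {m n o R : Type*} [CommRing R]

theorem sum_sum_smul_mul_transpose_of_unique [Fintype n] [Fintype o] [Unique o]
    (H : n → Matrix m o R) (P : Matrix n n R) :
    ∑ j, ∑ k, P j k • (H j * (H k)ᵀ) =
      of (fun a j => H j a default) * P * (of fun a j => H j a default)ᵀ := by
  ext a b
  simp only [sum_apply, smul_apply, mul_apply, Finset.univ_unique, Finset.sum_singleton,
    transpose_apply, of_apply, smul_eq_mul, Finset.sum_mul]
  rw [Finset.sum_comm]
  refine Finset.sum_congr rfl fun j _ => Finset.sum_congr rfl fun k _ => ?_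
  ring

theorem transpose_mul_mul_of_unique_apply [Fintype m] [Fintype o] [Unique o]
    (H : n → Matrix m o R) (K : Matrix m m R) (j k : n) :
    ((of fun a j => H j a default)ᵀ * K * of fun a j => H j a default) j k =
      ((H j)ᵀ * K * H k) default default := by
  simp [mul_apply]

theorem transpose_mul_mul_apply_self_comm [Fintype m] {K : Matrix m m R} (hK : Kᵀ = K)
    (A B : Matrix m o R) (i : o) : (Aᵀ * K * B) i i = (Bᵀ * K * A) i i := by
  rw [← transpose_apply (Bᵀ * K * A)]
  simp only [transpose_mul, transpose_transpose, hK, Matrix.mul_assoc]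

theorem transpose_one_sub_mul_mul_one_sub [Fintype m] [Fintype n] [DecidableEq m]
    {K : Matrix m m R} (hK : Kᵀ = K) (H : Matrix m n R) {P Q : Matrix n n R}
    (h : Qᵀ * (Hᵀ * K * H) * P = Qᵀ + P) :
    (1 - H * Q * Hᵀ * K)ᵀ * K * (1 - H * P * Hᵀ * K) = K := by
  have expand : (1 - H * Q * Hᵀ * K)ᵀ * K * (1 - H * P * Hᵀ * K) =
      K - K * H * Qᵀ * Hᵀ * K - K * H * P * Hᵀ * K
        + K * H * (Qᵀ * (Hᵀ * K * H) * P) * Hᵀ * K := by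
    simp only [transpose_sub, transpose_one, transpose_mul, transpose_transpose, hK, sub_mul,
      mul_sub, one_mul, mul_one, Matrix.mul_assoc]
    abel
  rw [expand, h]
  simp only [Matrix.mul_add, Matrix.add_mul, Matrix.mul_assoc]
  abel

theorem transpose_mul_mul_eq_of_sylvester [Fintype n] [DecidableEq n]
    {Γ Γinv D₁ D₁' D₂ D₂' : Matrix n n R}
    (hΓ : Γ * Γinv = 1) (hΓ' : Γinv * Γ = 1) (hsymm : Γinvᵀ = Γinv)
    (hD₁ : D₁ * D₁' = 1) (hD₂ : D₂ * D₂' = 1) :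
    (Γinv * D₁')ᵀ * (Γ * D₁ᵀ + D₂ * Γ) * (Γinv * D₂') = (Γinv * D₁')ᵀ + Γinv * D₂' := by
  have hD₁t : D₁'ᵀ * D₁ᵀ = 1 := by rw [← transpose_mul, hD₁, transpose_one]
  rw [transpose_mul, hsymm]
  calc D₁'ᵀ * Γinv * (Γ * D₁ᵀ + D₂ * Γ) * (Γinv * D₂')
      = D₁'ᵀ * (Γinv * Γ) * D₁ᵀ * Γinv * D₂' + D₁'ᵀ * Γinv * (D₂ * ((Γ * Γinv) * D₂')) := by
        simp only [Matrix.mul_add, Matrix.add_mul, Matrix.mul_assoc]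
    _ = Γinv * D₂' + D₁'ᵀ * Γinv := by
        rw [hΓ', hΓ, Matrix.mul_one, Matrix.one_mul, hD₂, Matrix.mul_one, hD₁t, Matrix.one_mul]
    _ = D₁'ᵀ * Γinv + Γinv * D₂' := add_comm _ _

end Matrix

theorem stmt_15_general (M L : ℕ) (μ : Fin L → ℂ)
    (hμsum : ∀ j k, μ j + μ k ≠ 0)
    (H : Fin L → Matrix (Fin M) (Fin 1) ℂ)
    (K : Matrix (Fin M) (Fin M) ℂ) (hKsym : Kᵀ = K)
    (Γ Γinv : Matrix (Fin L) (Fin L) ℂ)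
    (hΓ : ∀ j k, Γ j k = (((H j)ᵀ * K * H k) 0 0) / (μ j + μ k))
    (hΓinv : Γ * Γinv = 1)
    (lam : ℂ) (hlam1 : ∀ j, lam ≠ μ j) (hlam2 : ∀ k, lam ≠ -μ k)
    (T Tneg : Matrix (Fin M) (Fin M) ℂ)
    (hT : T = (∏ i, (lam + μ i)) • ((1 : Matrix (Fin M) (Fin M) ℂ)
        - ∑ j, ∑ k, ((Γinv j k) / (lam + μ k)) • (H j * (H k)ᵀ * K)))
    (hTneg : Tneg = (∏ i, (-lam + μ i)) • ((1 : Matrix (Fin M) (Fin M) ℂ)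
        - ∑ j, ∑ k, ((Γinv j k) / (-lam + μ k)) • (H j * (H k)ᵀ * K))) :
    Tnegᵀ * K * T = (∏ i, ((μ i) ^ 2 - lam ^ 2)) • K := by
  set Hcols : Matrix (Fin M) (Fin L) ℂ := of fun a j => H j a default
  have hΓsymm : Γᵀ = Γ := by
    ext j k
    rw [transpose_apply, hΓ, hΓ, add_comm (μ k), transpose_mul_mul_apply_self_comm hKsym]
  have hΓinv' : Γinv * Γ = 1 := mul_eq_one_comm.mp hΓinv
  have hΓinvsymm : Γinvᵀ = Γinv := inv_eq_right_inv hΓinv ▸ IsSymm.inv hΓsymm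
  have hsylv : Hcolsᵀ * K * Hcols =
      Γ * (diagonal fun k => -lam + μ k)ᵀ + diagonal (fun k => lam + μ k) * Γ := by
    ext j k
    rw [transpose_mul_mul_of_unique_apply]
    change ((H j)ᵀ * K * H k) 0 0 = _
    simp only [diagonal_transpose, Matrix.add_apply, mul_diagonal, diagonal_mul, hΓ]
    field_simp [hμsum j k]
    ring
  have hres : ∀ c : ℂ, ∑ j, ∑ k, (Γinv j k / (c + μ k)) • (H j * (H k)ᵀ * K) =
      Hcols * (Γinv * diagonal fun k => (c + μ k)⁻¹) * Hcolsᵀ * K := by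
    intro c
    rw [← sum_sum_smul_mul_transpose_of_unique]
    simp only [Matrix.sum_mul, Matrix.smul_mul, mul_diagonal, div_eq_mul_inv]
  have hdiag : ∀ c : ℂ, (∀ k, c + μ k ≠ 0) →
      diagonal (fun k => c + μ k) * diagonal (fun k => (c + μ k)⁻¹) = 1 := by
    intro c hc
    simp [diagonal_mul_diagonal, hc]
  have hpos : ∀ k, lam + μ k ≠ 0 := fun k h => hlam2 k (eq_neg_of_add_eq_zero_left h)
  have hneg : ∀ k, -lam + μ k ≠ 0 := fun k h => hlam1 k (by linear_combination -h)
  have key := transpose_one_sub_mul_mul_one_sub hKsym Hcols (hsylv ▸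
    transpose_mul_mul_eq_of_sylvester hΓinv hΓinv' hΓinvsymm (hdiag _ hneg) (hdiag _ hpos))
  rw [hT, hTneg, hres, hres, transpose_smul, smul_mul, smul_mul, Matrix.mul_smul, key, smul_smul,
    ← Finset.prod_mul_distrib]
  congr 1
  exact Finset.prod_congr rfl fun i _ => by ring

theorem stmt_15 (M L : ℕ) (hL : 0 < L) (μ : Fin L → ℂ)
    (hμ0 : ∀ i, μ i ≠ 0) (hμsum : ∀ j k, μ j + μ k ≠ 0)
    (H : Fin L → Matrix (Fin M) (Fin 1) ℂ)
    (K : Matrix (Fin M) (Fin M) ℂ) (hKsym : Kᵀ = K) (hKunit : IsUnit K.det)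
    (Γ Γinv : Matrix (Fin L) (Fin L) ℂ)
    (hΓ : ∀ j k, Γ j k = (((H j)ᵀ * K * H k) 0 0) / (μ j + μ k))
    (hΓinv : Γ * Γinv = 1) (hΓinv' : Γinv * Γ = 1)
    (lam : ℂ) (hlam1 : ∀ j, lam ≠ μ j) (hlam2 : ∀ k, lam ≠ -μ k)
    (T Tneg : Matrix (Fin M) (Fin M) ℂ)
    (hT : T = (∏ i, (lam + μ i)) • ((1 : Matrix (Fin M) (Fin M) ℂ)
        - ∑ j, ∑ k, ((Γinv j k) / (lam + μ k)) • (H j * (H k)ᵀ * K)))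
    (hTneg : Tneg = (∏ i, (-lam + μ i)) • ((1 : Matrix (Fin M) (Fin M) ℂ)
        - ∑ j, ∑ k, ((Γinv j k) / (-lam + μ k)) • (H j * (H k)ᵀ * K))) :
    Tnegᵀ * K * T = (∏ i, ((μ i) ^ 2 - lam ^ 2)) • K :=
  stmt_15_general M L μ hμsum H K hKsym Γ Γinv hΓ hΓinv lam hlam1 hlam2 T Tneg hT hTneg
end

section
/- Let a = -|μ|² with |μ| ≠ 1 and N ≥ 1, and define γ_j = ∑_{c=1}^{N} a^{{j+c-2}} σ_c / (1 - a^N) and β_j = -a ∑_{c=1}^{N} a^{{c-j-1}} σ_c / (1 - a^N) for real numbers σ_1,...,σ_N (indices mod N, {k} the mod-N remainder). Then for every j: γ_{2-j} + |μ|² γ_{1-j} = σ_j, and β_{m-j-1} + |μ|² β_{m-j} = |μ|² σ_{m-j}. -/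
/-!
Write `G j = ∑_c a^{{c - j}} σ_c`. Shifting `j` by one multiplies every term by `a`, except
where `{c - j}` wraps around from `0` to `N - 1`: there `a · a^{N-1} = a^N` replaces `1`.
Hence `G j - a G (j + 1) = (1 - a^N) σ_j`. Since `γ_j = G (2 - j) / (1 - a^N)` and
`β_j = -a G (j + 1) / (1 - a^N)`, both identities are this recurrence divided by `1 - a^N`,
which is nonzero because `|a| = |μ|² ≠ 1`.
-/

namespace ZMod

variable {R : Type*} [CommRing R] {N : ℕ} [NeZero N]

lemma mul_pow_val_sub_one_of_ne_zero (a : R) {x : ZMod N} (hx : x ≠ 0) :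
    a * a ^ (x - 1).val = a ^ x.val := by
  have hN : N ≠ 1 := by rintro rfl; exact hx (Subsingleton.elim _ _)
  have hx1 : 1 ≤ x.val := Nat.one_le_iff_ne_zero.mpr ((val_eq_zero x).not.mpr hx)
  rw [val_sub (by rwa [val_one'' hN]), val_one'' hN, ← pow_succ', Nat.sub_add_cancel hx1]

lemma mul_pow_val_neg_one (a : R) : a * a ^ (-1 : ZMod N).val = a ^ N := by
  obtain ⟨n, rfl⟩ := Nat.exists_eq_succ_of_ne_zero (NeZero.ne N)
  rw [val_neg_one, ← pow_succ']

lemma pow_val_sub_mul_pow_val_sub_one (a : R) (x : ZMod N) :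
    a ^ x.val - a * a ^ (x - 1).val = if x = 0 then 1 - a ^ N else 0 := by
  split_ifs with hx
  · rw [hx, zero_sub, mul_pow_val_neg_one, val_zero, pow_zero]
  · rw [mul_pow_val_sub_one_of_ne_zero a hx, sub_self]

def cyclicGeomSum (a : R) (σ : ZMod N → R) (j : ZMod N) : R :=
  ∑ c, a ^ (c - j).val * σ c

lemma cyclicGeomSum_sub_mul_cyclicGeomSum_add_one (a : R) (σ : ZMod N → R) (j : ZMod N) :
    cyclicGeomSum a σ j - a * cyclicGeomSum a σ (j + 1) = (1 - a ^ N) * σ j := by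
  have hterm : ∀ c, a ^ (c - j).val * σ c - a * (a ^ (c - (j + 1)).val * σ c)
      = if c = j then (1 - a ^ N) * σ c else 0 := fun c => by
    rw [← mul_assoc, ← sub_mul, sub_add_eq_sub_sub, pow_val_sub_mul_pow_val_sub_one]
    simp only [sub_eq_zero]
    split_ifs <;> ring
  simp only [cyclicGeomSum, Finset.mul_sum, ← Finset.sum_sub_distrib, hterm,
    Finset.sum_ite_eq', Finset.mem_univ, if_true]

end ZMod

open ZMod

lemma one_sub_pow_ne_zero_of_abs_ne_one {a : ℝ} (ha : |a| ≠ 1) {N : ℕ} (hN : N ≠ 0) :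
    1 - a ^ N ≠ 0 := by
  rw [sub_ne_zero, ne_comm]
  intro h
  apply ha
  rw [← pow_eq_one_iff_of_nonneg (abs_nonneg a) hN, ← abs_pow, h, abs_one]

theorem stmt_18_general (N : ℕ) [NeZero N] (m : ZMod N)
    (μ : ℂ) (hμ1 : ‖μ‖ ≠ 1)
    (a : ℝ) (ha : a = -(‖μ‖) ^ 2)
    (σ : ZMod N → ℝ) (γ β : ZMod N → ℝ)
    (hγ : ∀ j, γ j = ∑ c : ZMod N, a ^ ((j + c - 2 : ZMod N)).val * σ c / (1 - a ^ N))
    (hβ : ∀ j, β j = -a * ∑ c : ZMod N, a ^ ((c - j - 1 : ZMod N)).val * σ c / (1 - a ^ N)) :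
    (∀ j, γ (2 - j) + (‖μ‖) ^ 2 * γ (1 - j) = σ j) ∧
    (∀ j, β (m - j - 1) + (‖μ‖) ^ 2 * β (m - j)
        = (‖μ‖) ^ 2 * σ (m - j)) := by
  have hμa : (‖μ‖) ^ 2 = -a := by rw [ha, neg_neg]
  have habs : |a| ≠ 1 := by
    rw [ha, abs_neg, abs_pow, abs_norm]
    exact fun h => hμ1 ((pow_eq_one_iff_of_nonneg (norm_nonneg μ) two_ne_zero).mp h)
  have hd : 1 - a ^ N ≠ 0 := one_sub_pow_ne_zero_of_abs_ne_one habs (NeZero.ne N)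
  have hγG : ∀ j, γ j = cyclicGeomSum a σ (2 - j) / (1 - a ^ N) := fun j => by
    simp only [hγ, cyclicGeomSum, Finset.sum_div, sub_sub_eq_add_sub, add_comm j]
  have hβG : ∀ j, β j = -a * cyclicGeomSum a σ (j + 1) / (1 - a ^ N) := fun j => by
    simp only [hβ, cyclicGeomSum, Finset.sum_div, mul_div_assoc, sub_add_eq_sub_sub]
  have hrec := cyclicGeomSum_sub_mul_cyclicGeomSum_add_one a σ
  refine ⟨fun j => ?_, fun j => ?_⟩
  · rw [hγG, hγG, sub_sub_cancel, show 2 - (1 - j) = j + 1 by ring, hμa]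
    field_simp
    linear_combination hrec j
  · rw [hβG, hβG, sub_add_cancel, hμa]
    field_simp
    linear_combination -a * hrec (m - j)

theorem stmt_18 (N : ℕ) [NeZero N] (hN : 0 < N) (m : ZMod N)
    (μ : ℂ) (hμ0 : μ ≠ 0) (hμ1 : ‖μ‖ ≠ 1)
    (a : ℝ) (ha : a = -(‖μ‖) ^ 2)
    (σ : ZMod N → ℝ) (γ β : ZMod N → ℝ)
    (hγ : ∀ j, γ j = ∑ c : ZMod N, a ^ ((j + c - 2 : ZMod N)).val * σ c / (1 - a ^ N))
    (hβ : ∀ j, β j = -a * ∑ c : ZMod N, a ^ ((c - j - 1 : ZMod N)).val * σ c / (1 - a ^ N)) :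
    (∀ j, γ (2 - j) + (‖μ‖) ^ 2 * γ (1 - j) = σ j) ∧
    (∀ j, β (m - j - 1) + (‖μ‖) ^ 2 * β (m - j)
        = (‖μ‖) ^ 2 * σ (m - j)) :=
  stmt_18_general N m μ hμ1 a ha σ γ β hγ hβ
end
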